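/- arXiv:2305.08508 — 3 statements merged into one kernel-verified Lean document; each statement's English description precedes it below -/
import Mathlib

section
/- Let Σ be a discrete-time LPV-SSA with state dimension n_x and let V = Ker 𝒪_{n_x-1} be the kernel of its extended observability matrix. If v ∈ V, then for every scheduling signal p : ℕ → ℙ, the free output response from initial state v is identically zero: 𝔜_{Σ,v}(0,p)(t) = 0 for all t ∈ ℕ. Consequently, for any two initial states x₁, x₂ with x₁ - x₂ ∈ V, 𝔜_{Σ,x₁} = 𝔜_{Σ,x₂}. -/
open Matrix

/-- Affine matrix-valued function of the scheduling value: `M(q) = M₀ + Σᵢ qᵢ Mᵢ`. -/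
noncomputable def affMat {np : ℕ} {m n : Type*}
    (M : Fin (np + 1) → Matrix m n ℝ) (q : Fin np → ℝ) : Matrix m n ℝ :=
  M 0 + ∑ i : Fin np, q i • M i.succ

/-- State trajectory of a discrete-time LPV-SSA: `x(t+1) = A(p(t)) x(t) + B(p(t)) u(t)`. -/
noncomputable def st {np : ℕ} {X U : Type*} [Fintype X] [Fintype U]
    (A : Fin (np + 1) → Matrix X X ℝ) (B : Fin (np + 1) → Matrix X U ℝ)
    (x0 : X → ℝ) (u : ℕ → U → ℝ) (p : ℕ → Fin np → ℝ) : ℕ → X → ℝ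
  | 0 => x0
  | t + 1 => affMat A (p t) *ᵥ st A B x0 u p t + affMat B (p t) *ᵥ u t

/-- Output trajectory (input-output map from initial state `x0`):
`y(t) = C(p(t)) x(t) + D(p(t)) u(t)`. -/
noncomputable def out {np : ℕ} {X U Y : Type*} [Fintype X] [Fintype U]
    (A : Fin (np + 1) → Matrix X X ℝ) (B : Fin (np + 1) → Matrix X U ℝ)
    (C : Fin (np + 1) → Matrix Y X ℝ) (D : Fin (np + 1) → Matrix Y U ℝ)
    (x0 : X → ℝ) (u : ℕ → U → ℝ) (p : ℕ → Fin np → ℝ) (t : ℕ) : Y → ℝ :=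
  affMat C (p t) *ᵥ st A B x0 u p t + affMat D (p t) *ᵥ u t

/-- Kernel of the `k`-step extended observability matrix `𝒪_k`. -/
noncomputable def kerO {np nx ny : ℕ}
    (A : Fin (np + 1) → Matrix (Fin nx) (Fin nx) ℝ)
    (C : Fin (np + 1) → Matrix (Fin ny) (Fin nx) ℝ) : ℕ → Submodule ℝ (Fin nx → ℝ)
  | 0 => ⨅ i : Fin (np + 1), LinearMap.ker (Matrix.mulVecLin (C i))
  | k + 1 => kerO A C k ⊓
      ⨅ i : Fin (np + 1), Submodule.comap (Matrix.mulVecLin (A i)) (kerO A C k)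

/-- Column space (range) of the `k`-step extended reachability matrix `ℛ_k`. -/
noncomputable def reachR {np nx nu : ℕ}
    (A : Fin (np + 1) → Matrix (Fin nx) (Fin nx) ℝ)
    (B : Fin (np + 1) → Matrix (Fin nx) (Fin nu) ℝ) : ℕ → Submodule ℝ (Fin nx → ℝ)
  | 0 => ⨆ i : Fin (np + 1), LinearMap.range (Matrix.mulVecLin (B i))
  | k + 1 => reachR A B k ⊔
      ⨆ i : Fin (np + 1), Submodule.map (Matrix.mulVecLin (A i)) (reachR A B k)


/-!
The subspace `V = Ker 𝒪_{n_x-1}` is the fixed point reached by iterating the deflationary map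
`W ↦ W ⊓ ⋂ᵢ Aᵢ⁻¹ W` on `Ker 𝒪₀`: each non-stationary step lowers the dimension, so `n_x - 1`
steps suffice. Hence `V` is invariant under every `Aᵢ` and lies in every `Ker Cᵢ`, so it is
invariant under `A(𝐩)` and killed by `C(𝐩)`. A free trajectory started in `V` therefore stays in
`V` and produces zero output; the second claim follows by linearity of the state in `(x₀, u)`.
-/

open Module Function

section FixedPoint

variable {K V : Type*} [DivisionRing K] [AddCommGroup V] [Module K V] [FiniteDimensional K V]
  {Φ : Submodule K V → Submodule K V}

theorem Submodule.isFixedPt_iterate_of_finrank_le (hΦ : ∀ U, Φ U ≤ U) (U : Submodule K V)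
    {j : ℕ} (hj : finrank K U ≤ j) : IsFixedPt Φ (Φ^[j] U) := by
  induction h : finrank K U using Nat.strong_induction_on generalizing U j with
  | _ n ih =>
    by_cases hU : Φ U = U
    · rw [iterate_fixed hU]
      exact hU
    · have hlt : finrank K (Φ U) < finrank K U :=
        Submodule.finrank_lt_finrank_of_lt (lt_of_le_of_ne (hΦ U) hU)
      obtain ⟨j, rfl⟩ := Nat.exists_eq_succ_of_ne_zero (show j ≠ 0 by omega)
      rw [iterate_succ_apply]
      exact ih _ (h ▸ hlt) (Φ U) (by omega) rfl

theorem Submodule.isFixedPt_iterate_of_finrank_le_succ (hΦ : ∀ U, Φ U ≤ U) (htop : Φ ⊤ = ⊤)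
    (U : Submodule K V) {j : ℕ} (hj : finrank K V ≤ j + 1) : IsFixedPt Φ (Φ^[j] U) := by
  by_cases hU : U = ⊤
  · subst hU
    rw [iterate_fixed htop]
    exact htop
  · exact isFixedPt_iterate_of_finrank_le hΦ U (by have := Submodule.finrank_lt hU; omega)

end FixedPoint

section Observability

variable {np nx ny : ℕ} (A : Fin (np + 1) → Matrix (Fin nx) (Fin nx) ℝ)
  (C : Fin (np + 1) → Matrix (Fin ny) (Fin nx) ℝ)

noncomputable def kerOStep (W : Submodule ℝ (Fin nx → ℝ)) : Submodule ℝ (Fin nx → ℝ) :=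
  W ⊓ ⨅ i, W.comap (A i).mulVecLin

theorem kerO_eq_iterate (k : ℕ) : kerO A C k = (kerOStep A)^[k] (kerO A C 0) := by
  induction k with
  | zero => rfl
  | succ k ih => rw [iterate_succ_apply', ← ih]; rfl

theorem kerO_le_kerO_zero (k : ℕ) : kerO A C k ≤ kerO A C 0 := by
  induction k with
  | zero => exact le_rfl
  | succ k ih => exact inf_le_left.trans ih

theorem kerO_le_ker (k : ℕ) (i : Fin (np + 1)) :
    kerO A C k ≤ LinearMap.ker (C i).mulVecLin :=
  (kerO_le_kerO_zero A C k).trans (iInf_le _ i)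

theorem isFixedPt_kerOStep_kerO_pred : IsFixedPt (kerOStep A) (kerO A C (nx - 1)) := by
  rw [kerO_eq_iterate]
  refine Submodule.isFixedPt_iterate_of_finrank_le_succ (fun _ => inf_le_left) ?_ _ ?_
  · simp only [Submodule.comap_top, iInf_top, inf_top_eq]
  · rw [finrank_fin_fun]
    omega

theorem kerO_pred_le_comap (i : Fin (np + 1)) :
    kerO A C (nx - 1) ≤ (kerO A C (nx - 1)).comap (A i).mulVecLin := by
  conv_lhs => rw [← isFixedPt_kerOStep_kerO_pred A C]
  exact inf_le_right.trans (iInf_le _ i)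

end Observability

theorem affMat_mulVec_mem {np : ℕ} {m n : Type*} [Fintype n] {M : Fin (np + 1) → Matrix m n ℝ}
    {W : Submodule ℝ (m → ℝ)} {v : n → ℝ} (hv : ∀ i, M i *ᵥ v ∈ W) (q : Fin np → ℝ) :
    affMat M q *ᵥ v ∈ W := by
  rw [affMat, Matrix.add_mulVec, Matrix.sum_mulVec]
  refine W.add_mem (hv 0) (W.sum_mem fun i _ => ?_)
  rw [Matrix.smul_mulVec]
  exact W.smul_mem _ (hv i.succ)

section Trajectories

variable {np : ℕ} {X U Y : Type*} [Fintype X] [Fintype U]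
  {A : Fin (np + 1) → Matrix X X ℝ} (B : Fin (np + 1) → Matrix X U ℝ)
  {C : Fin (np + 1) → Matrix Y X ℝ} (D : Fin (np + 1) → Matrix Y U ℝ)

theorem st_sub (x₁ x₂ : X → ℝ) (u : ℕ → U → ℝ) (p : ℕ → Fin np → ℝ) (t : ℕ) :
    st A B x₁ u p t - st A B x₂ u p t = st A B (x₁ - x₂) (fun _ _ => 0) p t := by
  induction t with
  | zero => rfl
  | succ t ih =>
    simp only [st, ← Pi.zero_def, Matrix.mulVec_zero, add_zero, ← ih, Matrix.mulVec_sub]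
    abel

theorem out_sub (x₁ x₂ : X → ℝ) (u : ℕ → U → ℝ) (p : ℕ → Fin np → ℝ) (t : ℕ) :
    out A B C D x₁ u p t - out A B C D x₂ u p t = out A B C D (x₁ - x₂) (fun _ _ => 0) p t := by
  unfold out
  rw [← st_sub B x₁ x₂ u p t]
  simp only [← Pi.zero_def, Matrix.mulVec_zero, add_zero, Matrix.mulVec_sub]
  abel

variable {W : Submodule ℝ (X → ℝ)}

theorem st_mem_of_le_comap (hA : ∀ i, W ≤ W.comap (A i).mulVecLin) {x₀ : X → ℝ} (hx₀ : x₀ ∈ W)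
    (p : ℕ → Fin np → ℝ) (t : ℕ) : st A B x₀ (fun _ _ => 0) p t ∈ W := by
  induction t with
  | zero => exact hx₀
  | succ t ih =>
    simp only [st, ← Pi.zero_def, Matrix.mulVec_zero, add_zero]
    exact affMat_mulVec_mem (fun i => hA i ih) (p t)

theorem out_eq_zero_of_le_comap_of_le_ker (hA : ∀ i, W ≤ W.comap (A i).mulVecLin)
    (hC : ∀ i, W ≤ LinearMap.ker (C i).mulVecLin) {x₀ : X → ℝ} (hx₀ : x₀ ∈ W)
    (p : ℕ → Fin np → ℝ) (t : ℕ) : out A B C D x₀ (fun _ _ => 0) p t = 0 := by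
  have hst := st_mem_of_le_comap B hA hx₀ p t
  simpa [out, ← Pi.zero_def] using affMat_mulVec_mem (W := ⊥) (fun i => hC i hst) (p t)

end Trajectories

theorem stmt7_general {np nx nu ny : ℕ} (P : Set (Fin np → ℝ))
    (A : Fin (np + 1) → Matrix (Fin nx) (Fin nx) ℝ)
    (B : Fin (np + 1) → Matrix (Fin nx) (Fin nu) ℝ)
    (C : Fin (np + 1) → Matrix (Fin ny) (Fin nx) ℝ)
    (D : Fin (np + 1) → Matrix (Fin ny) (Fin nu) ℝ) :
    (∀ v ∈ kerO A C (nx - 1), ∀ p : ℕ → Fin np → ℝ, (∀ t, p t ∈ P) →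
        ∀ t : ℕ, out A B C D v (fun _ _ => 0) p t = 0) ∧
    (∀ x1 x2 : Fin nx → ℝ, x1 - x2 ∈ kerO A C (nx - 1) →
        ∀ (u : ℕ → Fin nu → ℝ) (p : ℕ → Fin np → ℝ), (∀ t, p t ∈ P) →
        ∀ t : ℕ, out A B C D x1 u p t = out A B C D x2 u p t) := by
  have free_out_zero : ∀ v ∈ kerO A C (nx - 1), ∀ p t, out A B C D v (fun _ _ => 0) p t = 0 :=
    fun _ hv => out_eq_zero_of_le_comap_of_le_ker B D (kerO_pred_le_comap A C)
      (kerO_le_ker A C _) hv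
  refine ⟨fun v hv p _ => free_out_zero v hv p, fun x1 x2 hx u p _ t => ?_⟩
  rw [← sub_eq_zero, out_sub]
  exact free_out_zero _ hx p t

/-- initial states in `V = Ker 𝒪_{n_x-1}` have identically zero free output
response for every scheduling signal; hence initial states differing by an element of
`V` induce the same input-output function. -/
theorem stmt7 {np nx nu ny : ℕ} (hnx : 1 ≤ nx) (P : Set (Fin np → ℝ))
    (A : Fin (np + 1) → Matrix (Fin nx) (Fin nx) ℝ)
    (B : Fin (np + 1) → Matrix (Fin nx) (Fin nu) ℝ)
    (C : Fin (np + 1) → Matrix (Fin ny) (Fin nx) ℝ)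
    (D : Fin (np + 1) → Matrix (Fin ny) (Fin nu) ℝ) :
    (∀ v ∈ kerO A C (nx - 1), ∀ p : ℕ → Fin np → ℝ, (∀ t, p t ∈ P) →
        ∀ t : ℕ, out A B C D v (fun _ _ => 0) p t = 0) ∧
    (∀ x1 x2 : Fin nx → ℝ, x1 - x2 ∈ kerO A C (nx - 1) →
        ∀ (u : ℕ → Fin nu → ℝ) (p : ℕ → Fin np → ℝ), (∀ t, p t ∈ P) →
        ∀ t : ℕ, out A B C D x1 u p t = out A B C D x2 u p t) :=
  stmt7_general P A B C D
end

section
/- A discrete-time LPV-SSA Σ whose scheduling set ℙ ⊆ ℝ^{n_p} has nonempty interior is observable (distinct initial states induce distinct input-output functions) if and only if rank 𝒪_{n_x-1} = n_x, where 𝒪_{n_x-1} is the extended observability matrix. -/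
open Matrix

section Aux

open Finset Matrix Module Submodule

variable {np nx ny : ℕ}

lemma sum_mulVecAux {m n : Type*} [Fintype n] {ι : Type*} (s : Finset ι)
    (f : ι → Matrix m n ℝ) (v : n → ℝ) :
    (∑ i ∈ s, f i) *ᵥ v = ∑ i ∈ s, f i *ᵥ v := by
  induction s using Finset.cons_induction with
  | empty => simp [Matrix.zero_mulVec]
  | cons a s ha ih => simp [Finset.sum_cons, Matrix.add_mulVec, ih]

lemma mulVec_sumAux {m n : Type*} [Fintype n] {ι : Type*} (s : Finset ι)
    (M : Matrix m n ℝ) (f : ι → n → ℝ) :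
    M *ᵥ (∑ i ∈ s, f i) = ∑ i ∈ s, M *ᵥ f i := by
  induction s using Finset.cons_induction with
  | empty => simp [Matrix.mulVec_zero]
  | cons a s ha ih => simp [Finset.sum_cons, Matrix.mulVec_add, ih]

lemma affMat_mulVec {m n : Type*} [Fintype n] (M : Fin (np + 1) → Matrix m n ℝ)
    (q : Fin np → ℝ) (v : n → ℝ) :
    affMat M q *ᵥ v = M 0 *ᵥ v + ∑ i : Fin np, q i • (M i.succ *ᵥ v) := by
  rw [affMat, Matrix.add_mulVec, sum_mulVecAux]
  simp [Matrix.smul_mulVec]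

variable (A : Fin (np + 1) → Matrix (Fin nx) (Fin nx) ℝ)
variable (C : Fin (np + 1) → Matrix (Fin ny) (Fin nx) ℝ)

/-- zero-input state trajectory -/
noncomputable def stz (x : Fin nx → ℝ) (p : ℕ → Fin np → ℝ) : ℕ → Fin nx → ℝ
  | 0 => x
  | t + 1 => affMat A (p t) *ᵥ stz x p t

@[simp] lemma stz_zero (x : Fin nx → ℝ) (p : ℕ → Fin np → ℝ) : stz A x p 0 = x := rfl

lemma stz_succ (x : Fin nx → ℝ) (p : ℕ → Fin np → ℝ) (t : ℕ) :
    stz A x p (t + 1) = affMat A (p t) *ᵥ stz A x p t := rfl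

lemma stz_congr {x : Fin nx → ℝ} {p p' : ℕ → Fin np → ℝ} {t : ℕ}
    (h : ∀ s, s < t → p s = p' s) : stz A x p t = stz A x p' t := by
  induction t with
  | zero => rfl
  | succ t ih =>
    show affMat A (p t) *ᵥ stz A x p t = affMat A (p' t) *ᵥ stz A x p' t
    rw [h t (Nat.lt_succ_self t), ih (fun s hs => h s (hs.trans (Nat.lt_succ_self t)))]

lemma stz_sub (x y : Fin nx → ℝ) (p : ℕ → Fin np → ℝ) (t : ℕ) :
    stz A (x - y) p t = stz A x p t - stz A y p t := by
  induction t with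
  | zero => rfl
  | succ t ih =>
    show affMat A (p t) *ᵥ stz A (x - y) p t = _
    rw [ih, Matrix.mulVec_sub]
    rfl

lemma stz_shift (x : Fin nx → ℝ) (q : Fin np → ℝ) (p : ℕ → Fin np → ℝ) (t : ℕ) :
    stz A x (fun s => if s = 0 then q else p (s - 1)) (t + 1)
      = stz A (affMat A q *ᵥ x) p t := by
  induction t with
  | zero =>
    show affMat A (if (0:ℕ) = 0 then q else p 0) *ᵥ x = _
    simp
  | succ t ih =>
    show affMat A (if t + 1 = 0 then q else p (t + 1 - 1)) *ᵥ
        stz A x (fun s => if s = 0 then q else p (s - 1)) (t + 1) = _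
    rw [ih]
    simp only [Nat.succ_ne_zero, if_false, Nat.add_sub_cancel]
    rfl

lemma stz_update_ge {x : Fin nx → ℝ} {p : ℕ → Fin np → ℝ} {j t : ℕ} (h : t ≤ j)
    (q : Fin np → ℝ) : stz A x (Function.update p j q) t = stz A x p t :=
  stz_congr A fun s hs => Function.update_of_ne (Nat.ne_of_lt (lt_of_lt_of_le hs h)) q p

lemma stz_update_aff (x : Fin nx → ℝ) (p : ℕ → Fin np → ℝ) (j t : ℕ) :
    ∃ (a : Fin nx → ℝ) (b : Fin np → Fin nx → ℝ), ∀ q,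
      stz A x (Function.update p j q) t = a + ∑ i : Fin np, q i • b i := by
  induction t with
  | zero => exact ⟨x, fun _ => 0, by simp [stz]⟩
  | succ t ih =>
    by_cases hjt : j = t
    · subst hjt
      refine ⟨A 0 *ᵥ stz A x p j, fun i => A i.succ *ᵥ stz A x p j, fun q => ?_⟩
      show affMat A (Function.update p j q j) *ᵥ stz A x (Function.update p j q) j = _
      rw [Function.update_self, stz_update_ge A le_rfl, affMat_mulVec]
    · obtain ⟨a, b, hab⟩ := ih
      refine ⟨affMat A (p t) *ᵥ a, fun i => affMat A (p t) *ᵥ b i, fun q => ?_⟩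
      show affMat A (Function.update p j q t) *ᵥ stz A x (Function.update p j q) t = _
      rw [Function.update_of_ne (fun h => hjt h.symm), hab, Matrix.mulVec_add,
        mulVec_sumAux]
      simp [Matrix.mulVec_smul]

lemma expr_update_aff (x : Fin nx → ℝ) (p : ℕ → Fin np → ℝ) (j t : ℕ) :
    ∃ (a : Fin ny → ℝ) (b : Fin np → Fin ny → ℝ), ∀ q,
      affMat C (Function.update p j q t) *ᵥ stz A x (Function.update p j q) t
      = a + ∑ i : Fin np, q i • b i := by
  by_cases hjt : j = t
  · subst hjt
    refine ⟨C 0 *ᵥ stz A x p j, fun i => C i.succ *ᵥ stz A x p j, fun q => ?_⟩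
    rw [Function.update_self, stz_update_ge A le_rfl, affMat_mulVec]
  · obtain ⟨a, b, hab⟩ := stz_update_aff A x p j t
    refine ⟨affMat C (p t) *ᵥ a, fun i => affMat C (p t) *ᵥ b i, fun q => ?_⟩
    rw [Function.update_of_ne (fun h => hjt h.symm), hab, Matrix.mulVec_add,
      mulVec_sumAux]
    simp [Matrix.mulVec_smul]

/-- an affine function vanishing on a nonempty open set vanishes everywhere -/
lemma aff_vanish {V : Type*} [AddCommGroup V] [Module ℝ V] {U : Set (Fin np → ℝ)}
    (hUo : IsOpen U) {q₀ : Fin np → ℝ} (hq₀ : q₀ ∈ U)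
    {g : (Fin np → ℝ) → V} {a : V} {b : Fin np → V}
    (hg : ∀ q, g q = a + ∑ i : Fin np, q i • b i)
    (h0 : ∀ q ∈ U, g q = 0) (q : Fin np → ℝ) : g q = 0 := by
  obtain ⟨ε, hε, hball⟩ := Metric.isOpen_iff.mp hUo q₀ hq₀
  have hb : ∀ i, b i = 0 := by
    intro i
    set qi : Fin np → ℝ := Function.update q₀ i (q₀ i + ε / 2) with hqi
    have hmem : qi ∈ U := by
      apply hball
      rw [Metric.mem_ball]
      have hle : dist qi q₀ ≤ ε / 2 := by
        rw [dist_pi_le_iff (by positivity)]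
        intro j
        by_cases hji : j = i
        · subst hji
          rw [hqi, Function.update_self, Real.dist_eq]
          simp [abs_of_nonneg (by positivity : (0:ℝ) ≤ ε / 2)]
        · rw [hqi, Function.update_of_ne hji, dist_self]
          positivity
      linarith
    have h1 := h0 _ hmem
    have h2 := h0 _ hq₀
    rw [hg] at h1 h2
    have key : ∑ j : Fin np, qi j • b j = (∑ j : Fin np, q₀ j • b j) + (ε / 2) • b i := by
      have hterm : ∀ j : Fin np, qi j • b j
          = q₀ j • b j + (if j = i then (ε / 2) • b i else 0) := by
        intro j
        by_cases hji : j = i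
        · subst hji; rw [hqi, Function.update_self, add_smul]; simp
        · rw [hqi, Function.update_of_ne hji]; simp [hji]
      rw [Finset.sum_congr rfl (fun j _ => hterm j), Finset.sum_add_distrib]
      simp
    rw [key, ← add_assoc, h2, zero_add] at h1
    have : (ε / 2 : ℝ) ≠ 0 := by positivity
    exact (smul_eq_zero.mp h1).resolve_left this
  have ha : a = 0 := by
    have h2 := h0 _ hq₀
    rw [hg] at h2
    simpa [hb] using h2
  simp [hg, ha, hb]

/-- the key property: the output of the autonomous system from `x` vanishes
for all scheduling signals -/
def Sprop (x : Fin nx → ℝ) : Prop :=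
  ∀ (p : ℕ → Fin np → ℝ) (t : ℕ), affMat C (p t) *ᵥ stz A x p t = 0

lemma ext_lemma {U : Set (Fin np → ℝ)} (hUo : IsOpen U) {q₀ : Fin np → ℝ} (hq₀ : q₀ ∈ U)
    {x : Fin nx → ℝ}
    (h : ∀ p : ℕ → Fin np → ℝ, (∀ t, p t ∈ U) → ∀ t, affMat C (p t) *ᵥ stz A x p t = 0) :
    Sprop A C x := by
  have key : ∀ (j : ℕ) (p : ℕ → Fin np → ℝ) (t : ℕ), (∀ s, j ≤ s → p s ∈ U) →
      affMat C (p t) *ᵥ stz A x p t = 0 := by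
    intro j
    induction j with
    | zero => intro p t hp; exact h p (fun s => hp s (Nat.zero_le s)) t
    | succ j ih =>
      intro p t hp
      obtain ⟨a, b, hab⟩ := expr_update_aff A C x p j t
      have hvan : ∀ q ∈ U,
          affMat C (Function.update p j q t) *ᵥ stz A x (Function.update p j q) t = 0 := by
        intro q hq
        apply ih
        intro s hs
        rcases eq_or_lt_of_le hs with rfl | hlt
        · rwa [Function.update_self]
        · rw [Function.update_of_ne (Nat.ne_of_lt hlt).symm]
          exact hp s hlt
      have := aff_vanish hUo hq₀ hab hvan (p j)
      simpa [Function.update_eq_self] using this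
  intro p t
  have h1 : ∀ s, t + 1 ≤ s → (fun s => if s ≤ t then p s else q₀) s ∈ U := by
    intro s hs
    simp only [if_neg (by omega : ¬ s ≤ t)]
    exact hq₀
  have h2 := key (t + 1) (fun s => if s ≤ t then p s else q₀) t h1
  have e2 : stz A x (fun s => if s ≤ t then p s else q₀) t = stz A x p t :=
    stz_congr A (fun s hs => by simp [Nat.le_of_lt hs])
  simpa [e2] using h2

lemma mem_kerO_zero {x : Fin nx → ℝ} : x ∈ kerO A C 0 ↔ ∀ i, C i *ᵥ x = 0 := by
  simp [kerO, Submodule.mem_iInf, LinearMap.mem_ker, Matrix.mulVecLin_apply]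

lemma mem_kerO_succ {x : Fin nx → ℝ} {k : ℕ} :
    x ∈ kerO A C (k + 1) ↔ x ∈ kerO A C k ∧ ∀ i, A i *ᵥ x ∈ kerO A C k := by
  show x ∈ kerO A C k ⊓ _ ↔ _
  simp [Submodule.mem_inf, Submodule.mem_iInf, Submodule.mem_comap, Matrix.mulVecLin_apply]

lemma kerO_succ_le (k : ℕ) : kerO A C (k + 1) ≤ kerO A C k :=
  fun _ hx => ((mem_kerO_succ A C).mp hx).1

lemma kerO_anti : ∀ (d k : ℕ), kerO A C (k + d) ≤ kerO A C k := by
  intro d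
  induction d with
  | zero => exact fun k => le_rfl
  | succ d ih => exact fun k => le_trans (kerO_succ_le A C (k + d)) (ih k)

lemma affC_kerO {x : Fin nx → ℝ} (hx : x ∈ kerO A C 0) (q : Fin np → ℝ) :
    affMat C q *ᵥ x = 0 := by
  rw [affMat_mulVec]
  simp [(mem_kerO_zero A C).mp hx]

lemma affA_kerO {x : Fin nx → ℝ} {k : ℕ} (hx : x ∈ kerO A C (k + 1)) (q : Fin np → ℝ) :
    affMat A q *ᵥ x ∈ kerO A C k := by
  obtain ⟨h1, h2⟩ := (mem_kerO_succ A C).mp hx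
  rw [affMat_mulVec]
  exact Submodule.add_mem _ (h2 0)
    (Submodule.sum_mem _ fun i _ => Submodule.smul_mem _ _ (h2 i.succ))

lemma stz_kerO {x : Fin nx → ℝ} (hx : ∀ k, x ∈ kerO A C k) (p : ℕ → Fin np → ℝ) :
    ∀ t k, stz A x p t ∈ kerO A C k := by
  intro t
  induction t with
  | zero => exact hx
  | succ t ih =>
    intro k
    show affMat A (p t) *ᵥ stz A x p t ∈ kerO A C k
    exact affA_kerO A C (ih (k + 1)) (p t)

lemma Sprop_sub {x y : Fin nx → ℝ} (hx : Sprop A C x) (hy : Sprop A C y) :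
    Sprop A C (x - y) := by
  intro p t
  rw [stz_sub, Matrix.mulVec_sub, hx p t, hy p t, sub_zero]

lemma Sprop_affA {x : Fin nx → ℝ} (hx : Sprop A C x) (q : Fin np → ℝ) :
    Sprop A C (affMat A q *ᵥ x) := by
  intro p t
  have := hx (fun s => if s = 0 then q else p (s - 1)) (t + 1)
  rw [stz_shift] at this
  simpa using this

lemma affMat_zero {m n : Type*} (M : Fin (np + 1) → Matrix m n ℝ) :
    affMat M 0 = M 0 := by
  simp [affMat]

lemma affMat_single {m n : Type*} (M : Fin (np + 1) → Matrix m n ℝ) (j : Fin np) :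
    affMat M (Pi.single j 1) = M 0 + M j.succ := by
  rw [affMat]
  congr 1
  rw [Finset.sum_eq_single j]
  · simp
  · intro i _ hij
    simp [Pi.single_apply, hij]
  · simp

lemma Sprop_A {x : Fin nx → ℝ} (hx : Sprop A C x) (i : Fin (np + 1)) :
    Sprop A C (A i *ᵥ x) := by
  induction i using Fin.cases with
  | zero =>
    have := Sprop_affA A C hx 0
    rwa [affMat_zero] at this
  | succ j =>
    have h1 := Sprop_affA A C hx (Pi.single j 1)
    rw [affMat_single] at h1
    have h0 := Sprop_affA A C hx 0
    rw [affMat_zero] at h0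
    have := Sprop_sub A C h1 h0
    rwa [Matrix.add_mulVec, add_sub_cancel_left] at this

lemma Sprop_C {x : Fin nx → ℝ} (hx : Sprop A C x) (i : Fin (np + 1)) :
    C i *ᵥ x = 0 := by
  have h : ∀ q : Fin np → ℝ, affMat C q *ᵥ x = 0 := fun q => hx (fun _ => q) 0
  induction i using Fin.cases with
  | zero =>
    have := h 0
    rwa [affMat_zero] at this
  | succ j =>
    have h1 := h (Pi.single j 1)
    have h0 := h 0
    rw [affMat_single, Matrix.add_mulVec] at h1
    rw [affMat_zero] at h0
    rw [h0, zero_add] at h1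
    exact h1

lemma Sprop_kerO : ∀ (k : ℕ) (x : Fin nx → ℝ), Sprop A C x → x ∈ kerO A C k := by
  intro k
  induction k with
  | zero => exact fun x hx => (mem_kerO_zero A C).mpr (Sprop_C A C hx)
  | succ k ih =>
    intro x hx
    exact (mem_kerO_succ A C).mpr ⟨ih x hx, fun i => ih _ (Sprop_A A C hx i)⟩

lemma kerO_succ_def (k : ℕ) : kerO A C (k + 1) = kerO A C k ⊓
    ⨅ i : Fin (np + 1), Submodule.comap (Matrix.mulVecLin (A i)) (kerO A C k) := rfl

lemma kerO_stable {k : ℕ} (hk : kerO A C k = kerO A C (k + 1)) :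
    ∀ m, kerO A C (k + m) = kerO A C k := by
  have step : ∀ m, kerO A C (k + m) = kerO A C (k + m + 1) →
      kerO A C (k + m + 1) = kerO A C (k + m + 2) := by
    intro m h
    rw [kerO_succ_def A C (k + m + 1), ← h, ← kerO_succ_def A C (k + m)]
    exact h
  have main : ∀ m, kerO A C (k + m) = kerO A C k ∧
      kerO A C (k + m) = kerO A C (k + m + 1) := by
    intro m
    induction m with
    | zero => exact ⟨rfl, hk⟩
    | succ m ih => exact ⟨ih.2.symm.trans ih.1, step m ih.2⟩
  exact fun m => (main m).1

section Main

variable {nu : ℕ}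
variable (B : Fin (np + 1) → Matrix (Fin nx) (Fin nu) ℝ)
variable (D : Fin (np + 1) → Matrix (Fin ny) (Fin nu) ℝ)

lemma st_sub_s8 (x1 x2 : Fin nx → ℝ) (u : ℕ → Fin nu → ℝ) (p : ℕ → Fin np → ℝ) (t : ℕ) :
    st A B x1 u p t = st A B x2 u p t + stz A (x1 - x2) p t := by
  induction t with
  | zero => show x1 = x2 + (x1 - x2); rw [add_sub_cancel]
  | succ t ih =>
    show affMat A (p t) *ᵥ st A B x1 u p t + affMat B (p t) *ᵥ u t = _
    rw [ih, Matrix.mulVec_add]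
    show _ = affMat A (p t) *ᵥ st A B x2 u p t + affMat B (p t) *ᵥ u t
      + affMat A (p t) *ᵥ stz A (x1 - x2) p t
    abel

lemma out_sub_iff (x1 x2 : Fin nx → ℝ) (u : ℕ → Fin nu → ℝ) (p : ℕ → Fin np → ℝ) (t : ℕ) :
    out A B C D x1 u p t = out A B C D x2 u p t ↔
      affMat C (p t) *ᵥ stz A (x1 - x2) p t = 0 := by
  rw [out, out, st_sub_s8 A B x1 x2 u p t, Matrix.mulVec_add]
  constructor
  · intro h
    have := congrArg (fun z => z - (affMat C (p t) *ᵥ st A B x2 u p t + affMat D (p t) *ᵥ u t)) h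
    simpa [add_assoc, add_comm, add_left_comm] using this
  · intro h
    rw [h]
    abel

end Main

end Aux

/-- when the scheduling set has nonempty interior, a discrete-time LPV-SSA
is observable iff the extended observability matrix `𝒪_{n_x-1}` has full column rank
`n_x`, i.e. iff its kernel is trivial. -/
theorem stmt8 {np nx nu ny : ℕ} (hnx : 1 ≤ nx) (P : Set (Fin np → ℝ))
    (hP : (interior P).Nonempty)
    (A : Fin (np + 1) → Matrix (Fin nx) (Fin nx) ℝ)
    (B : Fin (np + 1) → Matrix (Fin nx) (Fin nu) ℝ)
    (C : Fin (np + 1) → Matrix (Fin ny) (Fin nx) ℝ)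
    (D : Fin (np + 1) → Matrix (Fin ny) (Fin nu) ℝ) :
    (∀ x1 x2 : Fin nx → ℝ,
        (∀ (u : ℕ → Fin nu → ℝ) (p : ℕ → Fin np → ℝ), (∀ t, p t ∈ P) →
          ∀ t : ℕ, out A B C D x1 u p t = out A B C D x2 u p t) → x1 = x2) ↔
      kerO A C (nx - 1) = ⊥ := by
  constructor
  · intro hObs
    have hKstar : ∀ x : Fin nx → ℝ, (∀ k, x ∈ kerO A C k) → x = 0 := by
      intro x hx
      apply hObs x 0
      intro u p hp t
      rw [out_sub_iff A C B D x 0 u p t, sub_zero]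
      exact affC_kerO A C (stz_kerO A C hx p t 0) (p t)
    have hstable : ∀ k, kerO A C k = kerO A C (k + 1) → kerO A C k = ⊥ := by
      intro k hk
      rw [eq_bot_iff]
      intro x hxk
      rw [Submodule.mem_bot]
      apply hKstar
      intro m
      rcases Nat.le_total m k with hm | hm
      · obtain ⟨d, rfl⟩ := Nat.exists_eq_add_of_le hm
        exact kerO_anti A C d m hxk
      · obtain ⟨d, rfl⟩ := Nat.exists_eq_add_of_le hm
        rw [kerO_stable A C hk d]
        exact hxk
    have hrank : ∀ k, kerO A C k = ⊥ ∨ Module.finrank ℝ (kerO A C k) + k < nx := by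
      intro k
      induction k with
      | zero =>
        by_cases h0 : kerO A C 0 = ⊤
        · left
          apply hstable 0
          rw [kerO_succ_def A C 0, h0]
          simp
        · right
          have h1 : Module.finrank ℝ (kerO A C 0) < Module.finrank ℝ (Fin nx → ℝ) :=
            Submodule.finrank_lt h0
          rw [Module.finrank_fin_fun] at h1
          omega
      | succ k ih =>
        rcases ih with h | h
        · left
          rw [eq_bot_iff]
          exact h ▸ kerO_succ_le A C k
        · by_cases he : kerO A C k = kerO A C (k + 1)
          · left
            rw [← he]
            exact hstable k he
          · right
            have hlt : kerO A C (k + 1) < kerO A C k :=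
              lt_of_le_of_ne (kerO_succ_le A C k) (fun hh => he hh.symm)
            have := Submodule.finrank_lt_finrank_of_lt hlt
            omega
    rcases hrank (nx - 1) with h | h
    · exact h
    · have h0 : Module.finrank ℝ (kerO A C (nx - 1)) = 0 := by omega
      exact Submodule.finrank_eq_zero.mp h0
  · intro hker x1 x2 hio
    obtain ⟨q₀, hq₀⟩ := hP
    have hS : Sprop A C (x1 - x2) := by
      apply ext_lemma A C isOpen_interior hq₀
      intro p hp t
      rw [← out_sub_iff A C B D x1 x2 (fun _ _ => 0) p t]
      exact hio (fun _ _ => 0) p (fun s => interior_subset (hp s)) t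
    have hmem := Sprop_kerO A C (nx - 1) _ hS
    rw [hker, Submodule.mem_bot] at hmem
    exact sub_eq_zero.mp hmem
end

section
/- Concatenation closure of manifest behaviors of span-reachable systems: Let Σ be a discrete-time LPV-SSA and suppose there exist a scheduling signal p_c, time t_c, and for every target state x* an input u_c steering the zero state to x* at time t_c under p_c (complete controllability of the time-varying system Σ(p_c) on [0,t_c]). Then the manifest behavior ℬ(Σ) is controllable: for any (y₁,u₁,p₁), (y₂,u₂,p₂) ∈ ℬ(Σ) and any t ∈ ℕ there exist τ > 0 and (y,u,p) ∈ ℬ(Σ) agreeing with (y₁,u₁,p₁) on [0,t] and satisfying (y(s),u(s),p(s)) = (y₂(s-t-τ), u₂(s-t-τ), p₂(s-t-τ)) for all s ≥ t+τ. -/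
open Matrix

/-!
By superposition, reachability of every state from `0` along `pc` in `tc` steps means that
any state can be steered to any other along `pc` in `tc` steps. So run the first trajectory up
to time `t`, steer its state at time `t + 1` along `pc` to the initial state of the second
trajectory, and then run the second one: the gap is `τ = tc + 1`.
-/

section Splice

variable {α : Type*}

def splice (k : ℕ) (f g : ℕ → α) : ℕ → α := fun s => if s < k then f s else g (s - k)

variable {k s : ℕ} {f g : ℕ → α}

lemma splice_of_lt (h : s < k) : splice k f g s = f s := if_pos h

lemma splice_add (j : ℕ) : splice k f g (k + j) = g j := by
  simp [splice]

lemma splice_mem {S : Set α} (hf : ∀ s, f s ∈ S) (hg : ∀ s, g s ∈ S) (s : ℕ) :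
    splice k f g s ∈ S := by
  unfold splice
  split_ifs
  exacts [hf s, hg _]

end Splice

section Trajectories

variable {np : ℕ} {X U Y : Type*} [Fintype X] [Fintype U]
  (A : Fin (np + 1) → Matrix X X ℝ) (B : Fin (np + 1) → Matrix X U ℝ)
  (C : Fin (np + 1) → Matrix Y X ℝ) (D : Fin (np + 1) → Matrix Y U ℝ)

lemma st_congr {x0 : X → ℝ} {u u' : ℕ → U → ℝ} {p p' : ℕ → Fin np → ℝ} {j : ℕ}
    (h : ∀ s < j, u s = u' s ∧ p s = p' s) :
    st A B x0 u p j = st A B x0 u' p' j := by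
  induction j with
  | zero => rfl
  | succ j ih =>
    obtain ⟨hu, hp⟩ := h j j.lt_succ_self
    simp only [st, ih fun s hs => h s (hs.trans j.lt_succ_self), hu, hp]

lemma st_add_time (x0 : X → ℝ) (u : ℕ → U → ℝ) (p : ℕ → Fin np → ℝ) (k j : ℕ) :
    st A B x0 u p (k + j) =
      st A B (st A B x0 u p k) (fun s => u (k + s)) (fun s => p (k + s)) j := by
  induction j with
  | zero => rfl
  | succ j ih => rw [← Nat.add_assoc, st, st, ih]

lemma st_add (x0 x0' : X → ℝ) (u u' : ℕ → U → ℝ) (p : ℕ → Fin np → ℝ) (j : ℕ) :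
    st A B (x0 + x0') (u + u') p j = st A B x0 u p j + st A B x0' u' p j := by
  induction j with
  | zero => rfl
  | succ j ih =>
    simp only [st, ih, Pi.add_apply, Matrix.mulVec_add]
    abel

lemma exists_st_eq_of_forall_exists_st_zero_eq {p : ℕ → Fin np → ℝ} {k : ℕ}
    (hreach : ∀ x : X → ℝ, ∃ u : ℕ → U → ℝ, st A B 0 u p k = x) (x₁ x₂ : X → ℝ) :
    ∃ u : ℕ → U → ℝ, st A B x₁ u p k = x₂ := by
  obtain ⟨u, hu⟩ := hreach (x₂ - st A B x₁ 0 p k)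
  refine ⟨u, ?_⟩
  have := st_add A B x₁ 0 0 u p k
  rw [add_zero, zero_add] at this
  rw [this, hu, add_sub_cancel]

variable {x0 : X → ℝ} {u u' : ℕ → U → ℝ} {p p' : ℕ → Fin np → ℝ} {k : ℕ}

lemma st_splice_of_le {j : ℕ} (hj : j ≤ k) :
    st A B x0 (splice k u u') (splice k p p') j = st A B x0 u p j :=
  st_congr A B fun _ hs => ⟨splice_of_lt (hs.trans_le hj), splice_of_lt (hs.trans_le hj)⟩

lemma st_splice_add (j : ℕ) :
    st A B x0 (splice k u u') (splice k p p') (k + j) = st A B (st A B x0 u p k) u' p' j := by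
  rw [st_add_time, st_splice_of_le A B le_rfl]
  simp only [splice_add]

lemma out_splice_of_lt {s : ℕ} (hs : s < k) :
    out A B C D x0 (splice k u u') (splice k p p') s = out A B C D x0 u p s := by
  simp only [out, st_splice_of_le A B hs.le, splice_of_lt hs]

lemma out_splice_add (j : ℕ) :
    out A B C D x0 (splice k u u') (splice k p p') (k + j) =
      out A B C D (st A B x0 u p k) u' p' j := by
  simp only [out, st_splice_add, splice_add]

end Trajectories

/-- if for some admissible scheduling signal `p_c` and time `t_c` every
state is reachable from the zero state at time `t_c` (complete controllability of the
frozen time-varying system `Σ(p_c)` on `[0,t_c]`), then the manifest behavior of `Σ` is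
controllable: any behavior trajectory can be continued, after some delay `τ > 0`, by any
other behavior trajectory. -/
theorem stmt14 {np nx nu ny : ℕ} (P : Set (Fin np → ℝ))
    (A : Fin (np + 1) → Matrix (Fin nx) (Fin nx) ℝ)
    (B : Fin (np + 1) → Matrix (Fin nx) (Fin nu) ℝ)
    (C : Fin (np + 1) → Matrix (Fin ny) (Fin nx) ℝ)
    (D : Fin (np + 1) → Matrix (Fin ny) (Fin nu) ℝ)
    (pc : ℕ → Fin np → ℝ) (hpc : ∀ t, pc t ∈ P) (tc : ℕ)
    (hctrb : ∀ xstar : Fin nx → ℝ, ∃ uc : ℕ → Fin nu → ℝ,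
      st A B (0 : Fin nx → ℝ) uc pc tc = xstar) :
    ∀ (y1 y2 : ℕ → Fin ny → ℝ) (u1 u2 : ℕ → Fin nu → ℝ) (p1 p2 : ℕ → Fin np → ℝ),
      (∀ t, p1 t ∈ P) → (∀ t, p2 t ∈ P) →
      (∃ x01 : Fin nx → ℝ, y1 = fun t => out A B C D x01 u1 p1 t) →
      (∃ x02 : Fin nx → ℝ, y2 = fun t => out A B C D x02 u2 p2 t) →
      ∀ t : ℕ, ∃ τ : ℕ, 0 < τ ∧
        ∃ (y : ℕ → Fin ny → ℝ) (u : ℕ → Fin nu → ℝ) (p : ℕ → Fin np → ℝ),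
          (∀ s, p s ∈ P) ∧
          (∃ x0 : Fin nx → ℝ, y = fun s => out A B C D x0 u p s) ∧
          (∀ s ≤ t, y s = y1 s ∧ u s = u1 s ∧ p s = p1 s) ∧
          (∀ s : ℕ, t + τ ≤ s →
            y s = y2 (s - t - τ) ∧ u s = u2 (s - t - τ) ∧ p s = p2 (s - t - τ)) := by
  rintro y1 y2 u1 u2 p1 p2 hp1 hp2 ⟨x01, rfl⟩ ⟨x02, rfl⟩ t
  obtain ⟨uc, huc⟩ := exists_st_eq_of_forall_exists_st_zero_eq A B hctrb
    (st A B x01 u1 p1 (t + 1)) x02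
  set u := splice (t + 1) u1 (splice tc uc u2)
  set p := splice (t + 1) p1 (splice tc pc p2)
  refine ⟨tc + 1, tc.succ_pos, fun s => out A B C D x01 u p s, u, p,
    splice_mem hp1 (splice_mem hpc hp2), ⟨x01, rfl⟩, fun s hs => ?_, fun s hs => ?_⟩
  · have hs : s < t + 1 := Nat.lt_succ_of_le hs
    exact ⟨out_splice_of_lt A B C D hs, splice_of_lt hs, splice_of_lt hs⟩
  · obtain ⟨j, rfl⟩ : ∃ j, s = t + 1 + (tc + j) := ⟨s - (t + tc + 1), by omega⟩
    have hj : t + 1 + (tc + j) - t - (tc + 1) = j := by omega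
    simp only [hj, u, p, splice_add, out_splice_add, huc, and_self]
end
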